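/- Let L ≥ 2 and let W_1,…,W_L be critical for the single-measurement trace-of-Hessian objective with measurement A, i.e. for each 1 ≤ i ≤ L−1, defining W̃_j = W_{j−1}⋯W_1 Aᵀ W_L⋯W_{j+1}, one has W̃_iᵀW̃_i = W̃_{i+1}W̃_{i+1}ᵀ. Then all W̃_1,…,W̃_L have the same multiset of singular values, and (Aᵀ W_L⋯W_1)^{L−1} Aᵀ = U_0 Λ^L U_Lᵀ for some matrices U_0, U_L with orthonormal columns and diagonal nonnegative Λ. -/

import Mathlib

/-! The balancedness relation `W̃ᵢᵀ W̃ᵢ = W̃ᵢ₊₁ W̃ᵢ₊₁ᵀ` identifies the right Gram matrix of `W̃ᵢ`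
with the left Gram matrix of `W̃ᵢ₊₁`. Since `B * C` and `C * B` have the same nonzero characteristic
roots (`X ^ #n χ(B * C) = X ^ #m χ(C * B)` for `B : Matrix m n K`), the nonzero squared singular
values are handed down the whole chain. The factorisation is a compact singular value decomposition
`U₀ diag(s) U_Lᵀ` of `(Aᵀ W_L ⋯ W_1) ^ (L - 1) Aᵀ`, with `Λ = diag(s ^ (1 / L))`. -/

open Matrix Finset

noncomputable def frobNorm {m n : Type*} [Fintype m] [Fintype n] (M : Matrix m n ℝ) : ℝ :=
  Real.sqrt (∑ i, ∑ j, (M i j) ^ 2)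

noncomputable def nuclearNorm {m n : Type*} [Fintype m] [Fintype n] [DecidableEq n]
    (M : Matrix m n ℝ) : ℝ :=
  ∑ i, Real.sqrt ((show (Mᵀ * M).IsHermitian by
    simpa using Matrix.isHermitian_conjTranspose_mul_self M).eigenvalues i)

noncomputable def singularValues {m n : Type*} [Fintype m] [Fintype n] [DecidableEq n]
    (M : Matrix m n ℝ) : n → ℝ :=
  fun i => Real.sqrt ((show (Mᵀ * M).IsHermitian by
    simpa using Matrix.isHermitian_conjTranspose_mul_self M).eigenvalues i)

noncomputable def spectralNorm' {m n : Type*} [Fintype m] [Fintype n] [DecidableEq n]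
    (M : Matrix m n ℝ) : ℝ :=
  ⨆ i, singularValues M i

variable {m n p r : Type*}

open Polynomial in
theorem Polynomial.filter_ne_zero_roots_X_pow_mul {K : Type*} [Field K] [DecidableEq K]
    {q : K[X]} (hq : q ≠ 0) (k : ℕ) :
    (X ^ k * q).roots.filter (· ≠ 0) = q.roots.filter (· ≠ 0) := by
  rw [roots_mul (mul_ne_zero (pow_ne_zero k X_ne_zero) hq), roots_X_pow, Multiset.filter_add,
    Multiset.filter_nsmul, Multiset.filter_singleton, if_neg (not_not.2 rfl),
    Multiset.empty_eq_zero, nsmul_zero, zero_add]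

theorem Matrix.filter_ne_zero_roots_charpoly_mul_comm {K : Type*} [Field K] [DecidableEq K]
    [Fintype m] [Fintype n] [DecidableEq m] [DecidableEq n] (B : Matrix m n K) (C : Matrix n m K) :
    (B * C).charpoly.roots.filter (· ≠ 0) = (C * B).charpoly.roots.filter (· ≠ 0) := by
  rw [← Polynomial.filter_ne_zero_roots_X_pow_mul (B * C).charpoly_monic.ne_zero (Fintype.card n),
    ← Polynomial.filter_ne_zero_roots_X_pow_mul (C * B).charpoly_monic.ne_zero (Fintype.card m),
    charpoly_mul_comm']

theorem Matrix.IsHermitian.roots_charpoly_eq_eigenvalues_real [Fintype n] [DecidableEq n]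
    {H : Matrix n n ℝ} (hH : H.IsHermitian) :
    H.charpoly.roots = univ.val.map hH.eigenvalues := by
  simp [hH.roots_charpoly_eq_eigenvalues, RCLike.ofReal_real_eq_id]

theorem filter_ne_zero_singularValues [Fintype m] [Fintype n] [DecidableEq n] (M : Matrix m n ℝ) :
    (univ.val.map (singularValues M)).filter (· ≠ 0)
      = ((Mᵀ * M).charpoly.roots.filter (· ≠ 0)).map Real.sqrt := by
  have hH : (Mᵀ * M).IsHermitian := by simpa using isHermitian_conjTranspose_mul_self M
  have hsv : singularValues M = Real.sqrt ∘ hH.eigenvalues := rfl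
  simp only [hH.roots_charpoly_eq_eigenvalues_real, hsv, ← Multiset.map_map, Multiset.filter_map]
  exact congrArg _ <| congrArg _ <| Multiset.filter_congr fun i _ =>
    Real.sqrt_ne_zero (eigenvalues_conjTranspose_mul_self_nonneg M i)

theorem filter_ne_zero_singularValues_eq_of_transpose_mul_self_eq [Fintype m] [Fintype n]
    [Fintype p] [DecidableEq n] [DecidableEq p] {M : Matrix m n ℝ} {N : Matrix n p ℝ}
    (h : Mᵀ * M = N * Nᵀ) :
    (univ.val.map (singularValues M)).filter (· ≠ 0)
      = (univ.val.map (singularValues N)).filter (· ≠ 0) := by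
  rw [filter_ne_zero_singularValues, filter_ne_zero_singularValues, h,
    filter_ne_zero_roots_charpoly_mul_comm]

theorem filter_ne_zero_singularValues_eq_of_balanced {ι : ℕ → Type*} [∀ j, Fintype (ι j)]
    [∀ j, DecidableEq (ι j)] (M : ∀ j, Matrix (ι j) (ι (j + 1)) ℝ) {k : ℕ}
    (hM : ∀ i < k, (M i)ᵀ * M i = M (i + 1) * (M (i + 1))ᵀ) {j : ℕ} (hj : j ≤ k) :
    (univ.val.map (singularValues (M j))).filter (· ≠ 0)
      = (univ.val.map (singularValues (M 0))).filter (· ≠ 0) := by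
  induction j with
  | zero => rfl
  | succ j ih =>
    rw [← ih (by omega), filter_ne_zero_singularValues_eq_of_transpose_mul_self_eq (hM j hj)]

theorem Matrix.IsHermitian.transpose_eigenvectorUnitary_mul_self [Fintype n] [DecidableEq n]
    {H : Matrix n n ℝ} (hH : H.IsHermitian) :
    (hH.eigenvectorUnitary : Matrix n n ℝ)ᵀ * hH.eigenvectorUnitary = 1 := by
  simpa [star_eq_conjTranspose] using Unitary.coe_star_mul_self hH.eigenvectorUnitary

theorem Matrix.IsHermitian.transpose_eigenvectorUnitary_mul_mul [Fintype n] [DecidableEq n]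
    {H : Matrix n n ℝ} (hH : H.IsHermitian) :
    (hH.eigenvectorUnitary : Matrix n n ℝ)ᵀ * H * hH.eigenvectorUnitary
      = diagonal hH.eigenvalues := by
  simpa [Unitary.conjStarAlgAut_star_apply, RCLike.ofReal_real_eq_id, star_eq_conjTranspose]
    using hH.conjStarAlgAut_star_eigenvectorUnitary

theorem Matrix.transpose_submatrix_mul_submatrix [Fintype m] {α : Type*} [CommSemiring α]
    (A : Matrix m n α) (c : r → n) :
    (A.submatrix id c)ᵀ * A.submatrix id c = (Aᵀ * A).submatrix c c := by
  rw [transpose_submatrix, submatrix_mul _ _ _ _ _ Function.bijective_id]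

theorem Matrix.col_eq_zero_of_transpose_mul_self_apply_eq_zero [Fintype m] {Z : Matrix m n ℝ}
    {j : n} (h : (Zᵀ * Z) j j = 0) (i : m) : Z i j = 0 := by
  rw [mul_apply] at h
  exact congrFun (dotProduct_self_eq_zero.1 h) i

theorem Matrix.mul_transpose_eq_submatrix_mul_transpose_submatrix [Fintype n] [Fintype r]
    {α : Type*} [CommSemiring α] (Z : Matrix m n α) (V : Matrix p n α) {c : r → n}
    (hc : Function.Injective c) (hZ : ∀ j ∉ Set.range c, ∀ i, Z i j = 0) :
    Z * Vᵀ = Z.submatrix id c * (V.submatrix id c)ᵀ := by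
  ext a b
  simp only [mul_apply, submatrix_apply, transpose_apply, id]
  exact (Fintype.sum_of_injective c hc _ _ (fun j hj => by rw [hZ j hj a, zero_mul])
    fun _ => rfl).symm

theorem Matrix.exists_mul_diagonal_of_transpose_mul_self_eq_diagonal [Fintype m] [Fintype r]
    [DecidableEq r] {Y : Matrix m r ℝ} {μ : r → ℝ} (hμ : ∀ i, 0 < μ i)
    (hY : Yᵀ * Y = diagonal μ) :
    ∃ U : Matrix m r ℝ, Uᵀ * U = 1 ∧ Y = U * diagonal fun i => √(μ i) := by
  refine ⟨Y * diagonal fun i => (√(μ i))⁻¹, ?_, ?_⟩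
  · rw [transpose_mul, diagonal_transpose, Matrix.mul_assoc, ← Matrix.mul_assoc Yᵀ, hY,
      diagonal_mul_diagonal, diagonal_mul_diagonal, ← diagonal_one]
    congr 1
    ext i
    field_simp
    rw [Real.sq_sqrt (hμ i).le, div_self (hμ i).ne']
  · rw [Matrix.mul_assoc, diagonal_mul_diagonal]
    conv_lhs => rw [← Matrix.mul_one Y, ← diagonal_one]
    congr 2
    ext i
    rw [inv_mul_cancel₀ (Real.sqrt_pos.2 (hμ i)).ne']

theorem Matrix.exists_svd [Fintype m] [Fintype n] [DecidableEq n] (M : Matrix m n ℝ) :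
    ∃ (k : ℕ) (U : Matrix m (Fin k) ℝ) (V : Matrix n (Fin k) ℝ) (s : Fin k → ℝ),
      Uᵀ * U = 1 ∧ Vᵀ * V = 1 ∧ (∀ i, 0 < s i) ∧ M = U * diagonal s * Vᵀ := by
  have hH : (Mᵀ * M).IsHermitian := by simpa using isHermitian_conjTranspose_mul_self M
  set V : Matrix n n ℝ := ↑hH.eigenvectorUnitary
  set μ := hH.eigenvalues
  have hV : Vᵀ * V = 1 := hH.transpose_eigenvectorUnitary_mul_self
  have hMV : (M * V)ᵀ * (M * V) = diagonal μ := by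
    rw [transpose_mul, Matrix.mul_assoc, ← Matrix.mul_assoc Mᵀ, ← Matrix.mul_assoc,
      hH.transpose_eigenvectorUnitary_mul_mul]
  let e := (Fintype.equivFin {j // μ j ≠ 0}).symm
  let c : Fin _ → n := fun i => (e i).val
  have hc : Function.Injective c := Subtype.val_injective.comp e.injective
  have hμ_pos : ∀ i, 0 < μ (c i) := fun i =>
    (eigenvalues_conjTranspose_mul_self_nonneg M _).lt_of_ne' (e i).2
  have hμ_zero : ∀ j ∉ Set.range c, μ j = 0 := fun j hj => by
    by_contra h
    exact hj ⟨e.symm ⟨j, h⟩, by simp [c]⟩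
  obtain ⟨U, hU, hMVc⟩ := exists_mul_diagonal_of_transpose_mul_self_eq_diagonal hμ_pos
    (Y := (M * V).submatrix id c)
    (by rw [transpose_submatrix_mul_submatrix, hMV, submatrix_diagonal _ _ hc]; rfl)
  refine ⟨_, U, V.submatrix id c, _, hU,
    by rw [transpose_submatrix_mul_submatrix, hV, submatrix_one _ hc],
    fun i => Real.sqrt_pos.2 (hμ_pos i), ?_⟩
  calc M = M * V * Vᵀ := by rw [Matrix.mul_assoc, mul_eq_one_comm.1 hV, Matrix.mul_one]
    _ = (M * V).submatrix id c * (V.submatrix id c)ᵀ :=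
      mul_transpose_eq_submatrix_mul_transpose_submatrix _ _ hc fun j hj =>
        col_eq_zero_of_transpose_mul_self_apply_eq_zero
          (by rw [hMV, diagonal_apply_eq, hμ_zero j hj])
    _ = _ := by rw [hMVc]

theorem balanced_tilde_svd_general {L : ℕ} (hL : 2 ≤ L) (d : ℕ → ℕ)
    (A : Matrix (Fin (d L)) (Fin (d 0)) ℝ)
    (P : ∀ j : ℕ, Matrix (Fin (d L)) (Fin (d j)) ℝ)
    (Q : ∀ j : ℕ, Matrix (Fin (d j)) (Fin (d 0)) ℝ)
    (hbal : ∀ i, i < L - 1 →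
      (Q i * Aᵀ * P (i + 1))ᵀ * (Q i * Aᵀ * P (i + 1))
        = (Q (i + 1) * Aᵀ * P (i + 2)) * (Q (i + 1) * Aᵀ * P (i + 2))ᵀ) :
    (∀ j, j < L →
      Multiset.filter (· ≠ 0)
          (Finset.univ.val.map (singularValues (Q j * Aᵀ * P (j + 1))))
        = Multiset.filter (· ≠ 0)
          (Finset.univ.val.map (singularValues (Q 0 * Aᵀ * P 1)))) ∧
    ∃ (k : ℕ) (U0 : Matrix (Fin (d 0)) (Fin k) ℝ)
      (UL : Matrix (Fin (d L)) (Fin k) ℝ) (σ : Fin k → ℝ),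
      U0ᵀ * U0 = 1 ∧ ULᵀ * UL = 1 ∧ (∀ i, 0 ≤ σ i) ∧
      (Aᵀ * Q L) ^ (L - 1) * Aᵀ
        = U0 * Matrix.diagonal (fun i => σ i ^ L) * ULᵀ := by
  refine ⟨fun j hj => filter_ne_zero_singularValues_eq_of_balanced (ι := fun j => Fin (d j))
    (fun j => Q j * Aᵀ * P (j + 1)) hbal (by omega), ?_⟩
  obtain ⟨k, U0, UL, s, hU0, hUL, hs, hM⟩ := exists_svd ((Aᵀ * Q L) ^ (L - 1) * Aᵀ)
  refine ⟨k, U0, UL, fun i => s i ^ (L⁻¹ : ℝ), hU0, hUL, fun i => Real.rpow_nonneg (hs i).le _, ?_⟩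
  simpa only [Real.rpow_inv_natCast_pow (hs _).le (by omega : L ≠ 0)] using hM

/-- Balancedness of the W̃ⱼ = Q_{j} Aᵀ P_{j+1} implies equal singular values and
    aligned SVDs: (Aᵀ E(W))^{L-1} Aᵀ = U₀ Λ^L U_Lᵀ. -/
theorem balanced_tilde_svd {L : ℕ} (hL : 2 ≤ L) (d : ℕ → ℕ)
    (A : Matrix (Fin (d L)) (Fin (d 0)) ℝ)
    (W : ∀ i : ℕ, Matrix (Fin (d (i + 1))) (Fin (d i)) ℝ)
    (P : ∀ j : ℕ, Matrix (Fin (d L)) (Fin (d j)) ℝ)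
    (Q : ∀ j : ℕ, Matrix (Fin (d j)) (Fin (d 0)) ℝ)
    (hPL : P L = 1) (hP : ∀ j, j < L → P j = P (j + 1) * W j)
    (hQ0 : Q 0 = 1) (hQ : ∀ j, j < L → Q (j + 1) = W j * Q j)
    (hbal : ∀ i, i < L - 1 →
      (Q i * Aᵀ * P (i + 1))ᵀ * (Q i * Aᵀ * P (i + 1))
        = (Q (i + 1) * Aᵀ * P (i + 2)) * (Q (i + 1) * Aᵀ * P (i + 2))ᵀ) :
    (∀ j, j < L →
      Multiset.filter (· ≠ 0)
          (Finset.univ.val.map (singularValues (Q j * Aᵀ * P (j + 1))))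
        = Multiset.filter (· ≠ 0)
          (Finset.univ.val.map (singularValues (Q 0 * Aᵀ * P 1)))) ∧
    ∃ (k : ℕ) (U0 : Matrix (Fin (d 0)) (Fin k) ℝ)
      (UL : Matrix (Fin (d L)) (Fin k) ℝ) (σ : Fin k → ℝ),
      U0ᵀ * U0 = 1 ∧ ULᵀ * UL = 1 ∧ (∀ i, 0 ≤ σ i) ∧
      (Aᵀ * Q L) ^ (L - 1) * Aᵀ
        = U0 * Matrix.diagonal (fun i => σ i ^ L) * ULᵀ :=
  balanced_tilde_svd_general hL d A P Q hbal
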